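/- (One-step expected Lyapunov decrease in the synchronous stage.) Let α, β be independent {0,1}-valued random variables with E[α] = ᾱ, E[β] = β̄, and set χ₁ = α − ᾱ + β − β̄ − αβ + ᾱβ̄ and χ₂ = α − ᾱ − αβ + ᾱβ̄. Fix x̃ ∈ ℝ^{2n} and x_a ∈ ℝⁿ with ‖x_a‖² ≤ γ̄² (γ̄ > 0), and define the random vector X⁺ = A¹x̃ + (β−β̄)A²x̃ − χ₁A³x̃ + (χ₂ + ᾱ(1−β̄))A⁴x_a. If Π ⪯ 0, then E[(X⁺)ᵀP X⁺] ≤ (1−ρ_s)·x̃ᵀP x̃ + εγ̄². -/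

import Mathlib

/-! Since `α` and `β` take values in `{0,1}`, any `G (α, β)` is the bilinear polynomial in `α`, `β`
interpolating `G` at the corners of the unit square, so by independence its expectation is the
average of the four corner values under the product Bernoulli law. For the quadratic form of `X⁺`,
written with the coefficients `β - β̄`, `(1-α)(1-β) - χ₃` and `α(1-β)`, that average is a quadratic
form in `(x̃, x_a)` whose matrix, after subtracting `(1-ρₛ)P ⊕ εI`, is exactly `Π`. -/

open Matrix MeasureTheory ProbabilityTheory

noncomputable section

/-- `M ⪯ 0`: the symmetric part of `M` is negative semidefinite. -/
def SymNegSemidef {l : Type*} [Fintype l] (M : Matrix l l ℝ) : Prop :=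
  (-(((1 : ℝ) / 2) • (M + Mᵀ))).PosSemidef

/-- Augmented block matrix `A¹ = [[A + χ₃BK, β̄BK],[χ₃I, β̄I]]` with `χ₃ = (1-ᾱ)(1-β̄)`. -/
def blkA1 (n : ℕ) (A BK : Matrix (Fin n) (Fin n) ℝ) (aB bB : ℝ) :
    Matrix (Fin n ⊕ Fin n) (Fin n ⊕ Fin n) ℝ :=
  fromBlocks (A + ((1 - aB) * (1 - bB)) • BK) (bB • BK)
    (((1 - aB) * (1 - bB)) • (1 : Matrix (Fin n) (Fin n) ℝ))
    (bB • (1 : Matrix (Fin n) (Fin n) ℝ))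

/-- `A² = [[0, BK],[0, I]]`. -/
def blkA2 (n : ℕ) (BK : Matrix (Fin n) (Fin n) ℝ) :
    Matrix (Fin n ⊕ Fin n) (Fin n ⊕ Fin n) ℝ :=
  fromBlocks 0 BK 0 (1 : Matrix (Fin n) (Fin n) ℝ)

/-- `A³ = [[BK, 0],[I, 0]]`. -/
def blkA3 (n : ℕ) (BK : Matrix (Fin n) (Fin n) ℝ) :
    Matrix (Fin n ⊕ Fin n) (Fin n ⊕ Fin n) ℝ :=
  fromBlocks BK 0 (1 : Matrix (Fin n) (Fin n) ℝ) 0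

/-- `A⁴ = [[BK],[I]]` (block column). -/
def blkA4 (n : ℕ) (BK : Matrix (Fin n) (Fin n) ℝ) :
    Matrix (Fin n ⊕ Fin n) (Fin n) ℝ :=
  Matrix.of (Sum.elim (fun i => BK i) (fun i => (1 : Matrix (Fin n) (Fin n) ℝ) i))

/-- The matrix `Π` of the synchronous-stage LMI (all cross terms symmetrized). -/
def PiMat (n : ℕ) (A BK : Matrix (Fin n) (Fin n) ℝ)
    (P : Matrix (Fin n ⊕ Fin n) (Fin n ⊕ Fin n) ℝ) (aB bB eps rhoS : ℝ) :
    Matrix ((Fin n ⊕ Fin n) ⊕ Fin n) ((Fin n ⊕ Fin n) ⊕ Fin n) ℝ :=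
  let aT : ℝ := aB * (1 - aB)
  let bT : ℝ := bB * (1 - bB)
  let A1 := blkA1 n A BK aB bB
  let A2 := blkA2 n BK
  let A3 := blkA3 n BK
  let A4 := blkA4 n BK
  let Pi11 : Matrix (Fin n ⊕ Fin n) (Fin n ⊕ Fin n) ℝ :=
    A1ᵀ * P * A1 + bT • (A2ᵀ * P * A2) - (1 - rhoS) • P
      + (aT * (1 - bB) ^ 2 + bT * (1 - aB) ^ 2 + aT * bT) • (A3ᵀ * P * A3)
      - (bT * (1 - aB)) • (A2ᵀ * P * A3 + A3ᵀ * P * A2)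
  let Pi12 : Matrix (Fin n ⊕ Fin n) (Fin n) ℝ :=
    (aB * (1 - bB)) • (A1ᵀ * P * A4) - (aB * bT) • (A2ᵀ * P * A4)
      - (aT * (1 - bB) ^ 2) • (A3ᵀ * P * A4)
  let Pi22 : Matrix (Fin n) (Fin n) ℝ :=
    (aB * (1 - bB)) • (A4ᵀ * P * A4) - eps • (1 : Matrix (Fin n) (Fin n) ℝ)
  fromBlocks Pi11 Pi12 Pi12ᵀ Pi22

def bernoulliPairMean (G : ℝ → ℝ → ℝ) (a b : ℝ) : ℝ :=
  (1 - a) * (1 - b) * G 0 0 + a * (1 - b) * G 1 0 + (1 - a) * b * G 0 1 + a * b * G 1 1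

lemma eq_bilinear_of_mem_zero_one (G : ℝ → ℝ → ℝ) {t u : ℝ} (ht : t = 0 ∨ t = 1)
    (hu : u = 0 ∨ u = 1) :
    G t u = G 0 0 + (G 1 0 - G 0 0) * t + (G 0 1 - G 0 0) * u
      + (G 0 0 - G 1 0 - G 0 1 + G 1 1) * (t * u) := by
  rcases ht with rfl | rfl <;> rcases hu with rfl | rfl <;> ring

lemma integrable_of_forall_eq_zero_or_one {Ω : Type*} [MeasurableSpace Ω] {μ : Measure Ω}
    [IsFiniteMeasure μ] {f : Ω → ℝ} (hf : AEStronglyMeasurable f μ)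
    (h01 : ∀ ω, f ω = 0 ∨ f ω = 1) : Integrable f μ :=
  .of_bound hf 1 (ae_of_all μ fun ω => by rcases h01 ω with h | h <;> simp [h])

theorem integral_comp_eq_bernoulliPairMean {Ω : Type*} [MeasurableSpace Ω] {μ : Measure Ω}
    [IsProbabilityMeasure μ] {α β : Ω → ℝ} (hαm : Measurable α) (hβm : Measurable β)
    (hα01 : ∀ ω, α ω = 0 ∨ α ω = 1) (hβ01 : ∀ ω, β ω = 0 ∨ β ω = 1) (hind : IndepFun α β μ)
    (G : ℝ → ℝ → ℝ) :
    ∫ ω, G (α ω) (β ω) ∂μ = bernoulliPairMean G (∫ ω, α ω ∂μ) (∫ ω, β ω ∂μ) := by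
  have hαβ01 (ω : Ω) : α ω * β ω = 0 ∨ α ω * β ω = 1 := by
    rcases hα01 ω with h | h <;> rcases hβ01 ω with h' | h' <;> simp [h, h']
  have iα := integrable_of_forall_eq_zero_or_one (μ := μ) hαm.aestronglyMeasurable hα01
  have iβ := integrable_of_forall_eq_zero_or_one (μ := μ) hβm.aestronglyMeasurable hβ01
  have iαβ := integrable_of_forall_eq_zero_or_one (μ := μ) (f := fun ω => α ω * β ω)
    (hαm.mul hβm).aestronglyMeasurable hαβ01
  have hαβ : ∫ ω, α ω * β ω ∂μ = (∫ ω, α ω ∂μ) * ∫ ω, β ω ∂μ :=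
    hind.integral_fun_mul_eq_mul_integral hαm.aestronglyMeasurable hβm.aestronglyMeasurable
  rw [integral_congr_ae (ae_of_all μ fun ω => eq_bilinear_of_mem_zero_one G (hα01 ω) (hβ01 ω)),
    integral_add (by fun_prop) (by fun_prop), integral_add (by fun_prop) (by fun_prop),
    integral_add (by fun_prop) (by fun_prop), integral_const, integral_const_mul,
    integral_const_mul, integral_const_mul, hαβ]
  simp only [bernoulliPairMean, probReal_univ, smul_eq_mul, one_mul]
  ring

section QuadraticForm

variable {ι : Type*} [Fintype ι]

lemma Matrix.IsSymm.dotProduct_mulVec_comm {P : Matrix ι ι ℝ} (hP : P.IsSymm) (x y : ι → ℝ) :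
    x ⬝ᵥ (P *ᵥ y) = y ⬝ᵥ (P *ᵥ x) := by
  rw [dotProduct_mulVec, ← hP.eq, vecMul_transpose, hP.eq, dotProduct_comm]

lemma SymNegSemidef.dotProduct_mulVec_nonpos {M : Matrix ι ι ℝ} (hM : SymNegSemidef M)
    (z : ι → ℝ) : z ⬝ᵥ (M *ᵥ z) ≤ 0 := by
  have h := hM.dotProduct_mulVec_nonneg z
  rw [star_trivial, neg_mulVec, dotProduct_neg, smul_mulVec, dotProduct_smul, add_mulVec,
    dotProduct_add, mulVec_transpose, dotProduct_comm z (z ᵥ* _), ← dotProduct_mulVec,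
    smul_eq_mul] at h
  linarith

/-- The coefficients are the first and second moments of `β - β̄`, `(1-α)(1-β) - χ₃` and
`α(1-β)` for independent Bernoulli variables `α`, `β` of means `a = ᾱ`, `b = β̄`. -/
def momentForm (P : Matrix ι ι ℝ) (a b : ℝ) (w₁ w₂ w₃ w₄ : ι → ℝ) : ℝ :=
  let q (x y : ι → ℝ) : ℝ := x ⬝ᵥ (P *ᵥ y)
  let aT := a * (1 - a)
  let bT := b * (1 - b)
  q w₁ w₁ + bT * q w₂ w₂ + (aT * (1 - b) ^ 2 + bT * (1 - a) ^ 2 + aT * bT) * q w₃ w₃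
    + a * (1 - b) * q w₄ w₄ - 2 * (bT * (1 - a)) * q w₂ w₃ + 2 * (a * (1 - b)) * q w₁ w₄
    - 2 * (a * bT) * q w₂ w₄ - 2 * (aT * (1 - b) ^ 2) * q w₃ w₄

theorem bernoulliPairMean_quadForm {P : Matrix ι ι ℝ} (hP : P.IsSymm) (a b : ℝ)
    (w₁ w₂ w₃ w₄ : ι → ℝ) :
    bernoulliPairMean (fun t u =>
      let x := w₁ + (u - b) • w₂ + ((1 - t) * (1 - u) - (1 - a) * (1 - b)) • w₃
        + (t * (1 - u)) • w₄
      x ⬝ᵥ (P *ᵥ x)) a b = momentForm P a b w₁ w₂ w₃ w₄ := by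
  simp only [bernoulliPairMean, momentForm, mulVec_add, mulVec_smul, dotProduct_add,
    add_dotProduct, dotProduct_smul, smul_dotProduct, smul_eq_mul,
    hP.dotProduct_mulVec_comm w₂ w₁, hP.dotProduct_mulVec_comm w₃ w₁,
    hP.dotProduct_mulVec_comm w₄ w₁, hP.dotProduct_mulVec_comm w₃ w₂,
    hP.dotProduct_mulVec_comm w₄ w₂, hP.dotProduct_mulVec_comm w₄ w₃]
  ring

end QuadraticForm

theorem dotProduct_PiMat_mulVec (n : ℕ) (A BK : Matrix (Fin n) (Fin n) ℝ)
    {P : Matrix (Fin n ⊕ Fin n) (Fin n ⊕ Fin n) ℝ} (hP : P.IsSymm) (a b eps rhoS : ℝ)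
    (xt : Fin n ⊕ Fin n → ℝ) (xa : Fin n → ℝ) :
    Sum.elim xt xa ⬝ᵥ (PiMat n A BK P a b eps rhoS *ᵥ Sum.elim xt xa)
      = momentForm P a b (blkA1 n A BK a b *ᵥ xt) (blkA2 n BK *ᵥ xt) (blkA3 n BK *ᵥ xt)
          (blkA4 n BK *ᵥ xa)
        - (1 - rhoS) * (xt ⬝ᵥ (P *ᵥ xt)) - eps * (xa ⬝ᵥ xa) := by
  have q_mul {l m : Type} [Fintype l] [Fintype m] (M : Matrix (Fin n ⊕ Fin n) l ℝ)
      (N : Matrix (Fin n ⊕ Fin n) m ℝ) (x : l → ℝ) (y : m → ℝ) :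
      x ⬝ᵥ ((Mᵀ * (P * N)) *ᵥ y) = (M *ᵥ x) ⬝ᵥ (P *ᵥ (N *ᵥ y)) := by
    rw [← mulVec_mulVec, ← mulVec_mulVec, dotProduct_mulVec, vecMul_transpose]
  simp only [PiMat, momentForm, transpose_sub, transpose_smul, transpose_mul,
    transpose_transpose, hP.eq, Matrix.mul_assoc, fromBlocks_mulVec, Sum.elim_comp_inl,
    Sum.elim_comp_inr, sumElim_dotProduct_sumElim, add_mulVec, sub_mulVec, smul_mulVec,
    one_mulVec, dotProduct_add, dotProduct_sub, dotProduct_smul, smul_eq_mul, q_mul,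
    hP.dotProduct_mulVec_comm (blkA3 n BK *ᵥ xt) (blkA2 n BK *ᵥ xt),
    hP.dotProduct_mulVec_comm (blkA4 n BK *ᵥ xa)]
  ring

theorem stmt13_general (n r : ℕ) (A : Matrix (Fin n) (Fin n) ℝ) (B : Matrix (Fin n) (Fin r) ℝ)
    (K : Matrix (Fin r) (Fin n) ℝ)
    {Ω : Type*} [MeasurableSpace Ω] (μ : Measure Ω) [IsProbabilityMeasure μ]
    (α β : Ω → ℝ) (hαm : Measurable α) (hβm : Measurable β)
    (hα01 : ∀ ω, α ω = 0 ∨ α ω = 1) (hβ01 : ∀ ω, β ω = 0 ∨ β ω = 1)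
    (hind : IndepFun α β μ)
    (alphaBar betaBar : ℝ)
    (hαmean : ∫ ω, α ω ∂μ = alphaBar) (hβmean : ∫ ω, β ω ∂μ = betaBar)
    (χ₁ χ₂ : Ω → ℝ)
    (hχ₁ : ∀ ω, χ₁ ω = α ω - alphaBar + β ω - betaBar - α ω * β ω + alphaBar * betaBar)
    (hχ₂ : ∀ ω, χ₂ ω = α ω - alphaBar - α ω * β ω + alphaBar * betaBar)
    (P : Matrix (Fin n ⊕ Fin n) (Fin n ⊕ Fin n) ℝ) (hP : P.PosDef)
    (eps rhoS gammaBar : ℝ) (heps : 0 < eps)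
    (xt : Fin n ⊕ Fin n → ℝ) (xa : Fin n → ℝ) (hxa : xa ⬝ᵥ xa ≤ gammaBar ^ 2)
    (hPi : SymNegSemidef (PiMat n A (B * K) P alphaBar betaBar eps rhoS))
    (Xplus : Ω → Fin n ⊕ Fin n → ℝ)
    (hXplus : ∀ ω, Xplus ω
      = blkA1 n A (B * K) alphaBar betaBar *ᵥ xt
        + (β ω - betaBar) • (blkA2 n (B * K) *ᵥ xt)
        - χ₁ ω • (blkA3 n (B * K) *ᵥ xt)
        + (χ₂ ω + alphaBar * (1 - betaBar)) • (blkA4 n (B * K) *ᵥ xa)) :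
    ∫ ω, Xplus ω ⬝ᵥ (P *ᵥ Xplus ω) ∂μ
      ≤ (1 - rhoS) * (xt ⬝ᵥ (P *ᵥ xt)) + eps * gammaBar ^ 2 := by
  set w₁ := blkA1 n A (B * K) alphaBar betaBar *ᵥ xt
  set w₂ := blkA2 n (B * K) *ᵥ xt
  set w₃ := blkA3 n (B * K) *ᵥ xt
  set w₄ := blkA4 n (B * K) *ᵥ xa
  set G : ℝ → ℝ → ℝ := fun t u =>
    let x := w₁ + (u - betaBar) • w₂ + ((1 - t) * (1 - u) - (1 - alphaBar) * (1 - betaBar)) • w₃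
      + (t * (1 - u)) • w₄
    x ⬝ᵥ (P *ᵥ x)
  have hG (ω : Ω) : Xplus ω ⬝ᵥ (P *ᵥ Xplus ω) = G (α ω) (β ω) := by
    have hχ₁' : -χ₁ ω = (1 - α ω) * (1 - β ω) - (1 - alphaBar) * (1 - betaBar) := by
      rw [hχ₁ ω]; ring
    have hχ₂' : χ₂ ω + alphaBar * (1 - betaBar) = α ω * (1 - β ω) := by rw [hχ₂ ω]; ring
    rw [hXplus ω, sub_eq_add_neg, ← neg_smul, hχ₁', hχ₂']
  have hPsymm : P.IsSymm := isHermitian_iff_isSymm.mp hP.isHermitian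
  have hPiQuad := hPi.dotProduct_mulVec_nonpos (Sum.elim xt xa)
  rw [dotProduct_PiMat_mulVec n A (B * K) hPsymm] at hPiQuad
  calc ∫ ω, Xplus ω ⬝ᵥ (P *ᵥ Xplus ω) ∂μ = bernoulliPairMean G alphaBar betaBar := by
        rw [integral_congr_ae (ae_of_all μ hG), ← hαmean, ← hβmean]
        exact integral_comp_eq_bernoulliPairMean hαm hβm hα01 hβ01 hind G
    _ = momentForm P alphaBar betaBar w₁ w₂ w₃ w₄ :=
        bernoulliPairMean_quadForm hPsymm _ _ _ _ _ _
    _ ≤ (1 - rhoS) * (xt ⬝ᵥ (P *ᵥ xt)) + eps * gammaBar ^ 2 := by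
        linarith [mul_le_mul_of_nonneg_left hxa heps.le]

/-- One-step expected Lyapunov decrease in the synchronous stage:
with `χ₁ = α - ᾱ + β - β̄ - αβ + ᾱβ̄`, `χ₂ = α - ᾱ - αβ + ᾱβ̄`, the random vector
`X⁺ = A¹x̃ + (β-β̄)A²x̃ - χ₁A³x̃ + (χ₂ + ᾱ(1-β̄))A⁴x_a` satisfies
`E[(X⁺)ᵀPX⁺] ≤ (1-ρₛ) x̃ᵀPx̃ + εγ̄²` provided `Π ⪯ 0` and `‖x_a‖² ≤ γ̄²`. -/
theorem stmt13 (n r : ℕ) (A : Matrix (Fin n) (Fin n) ℝ) (B : Matrix (Fin n) (Fin r) ℝ)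
    (K : Matrix (Fin r) (Fin n) ℝ)
    {Ω : Type*} [MeasurableSpace Ω] (μ : Measure Ω) [IsProbabilityMeasure μ]
    (α β : Ω → ℝ) (hαm : Measurable α) (hβm : Measurable β)
    (hα01 : ∀ ω, α ω = 0 ∨ α ω = 1) (hβ01 : ∀ ω, β ω = 0 ∨ β ω = 1)
    (hind : IndepFun α β μ)
    (alphaBar betaBar : ℝ)
    (hαmean : ∫ ω, α ω ∂μ = alphaBar) (hβmean : ∫ ω, β ω ∂μ = betaBar)
    (χ₁ χ₂ : Ω → ℝ)
    (hχ₁ : ∀ ω, χ₁ ω = α ω - alphaBar + β ω - betaBar - α ω * β ω + alphaBar * betaBar)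
    (hχ₂ : ∀ ω, χ₂ ω = α ω - alphaBar - α ω * β ω + alphaBar * betaBar)
    (P : Matrix (Fin n ⊕ Fin n) (Fin n ⊕ Fin n) ℝ) (hP : P.PosDef)
    (eps rhoS gammaBar : ℝ) (heps : 0 < eps) (hrhoS : 0 < rhoS ∧ rhoS < 1)
    (hgamma : 0 < gammaBar)
    (xt : Fin n ⊕ Fin n → ℝ) (xa : Fin n → ℝ) (hxa : xa ⬝ᵥ xa ≤ gammaBar ^ 2)
    (hPi : SymNegSemidef (PiMat n A (B * K) P alphaBar betaBar eps rhoS))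
    (Xplus : Ω → Fin n ⊕ Fin n → ℝ)
    (hXplus : ∀ ω, Xplus ω
      = blkA1 n A (B * K) alphaBar betaBar *ᵥ xt
        + (β ω - betaBar) • (blkA2 n (B * K) *ᵥ xt)
        - χ₁ ω • (blkA3 n (B * K) *ᵥ xt)
        + (χ₂ ω + alphaBar * (1 - betaBar)) • (blkA4 n (B * K) *ᵥ xa)) :
    ∫ ω, Xplus ω ⬝ᵥ (P *ᵥ Xplus ω) ∂μ
      ≤ (1 - rhoS) * (xt ⬝ᵥ (P *ᵥ xt)) + eps * gammaBar ^ 2 :=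
  stmt13_general n r A B K μ α β hαm hβm hα01 hβ01 hind alphaBar betaBar hαmean hβmean χ₁ χ₂ hχ₁ hχ₂
    P hP eps rhoS gammaBar heps xt xa hxa hPi Xplus hXplus

end
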